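/- arXiv:1907.13180 — 4 statements merged into one kernel-verified Lean document; each statement's English description precedes it below -/
import Mathlib

section
/- For any set A ⊆ ℝ^m, the separately convex hull of A × A equals the convex hull of A × A, which in turn equals (conv A) × (conv A). -/
open Set

/-- A set `E ⊆ V × V` is separately convex if for every `t ∈ (0,1)` and all
points of `E` sharing a first or a second component, their convex combination
lies in `E`. -/
def SepConvex {V : Type*} [AddCommGroup V] [Module ℝ V] (E : Set (V × V)) : Prop :=
  ∀ t : ℝ, t ∈ Set.Ioo (0 : ℝ) 1 → ∀ p ∈ E, ∀ q ∈ E, (p.1 = q.1 ∨ p.2 = q.2) →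
    t • p + (1 - t) • q ∈ E

/-- The separately convex hull: the smallest separately convex set containing `E`. -/
def sepConvexHull {V : Type*} [AddCommGroup V] [Module ℝ V]
    (E : Set (V × V)) : Set (V × V) :=
  ⋂₀ {F | SepConvex F ∧ E ⊆ F}

section

variable {V : Type*} [AddCommGroup V] [Module ℝ V]

theorem Convex.sepConvex {S : Set (V × V)} (hS : Convex ℝ S) : SepConvex S :=
  fun _ ht _ hp _ hq _ => hS hp hq ht.1.le (sub_nonneg.2 ht.2.le) (add_sub_cancel _ _)

theorem sepConvex_sepConvexHull (E : Set (V × V)) : SepConvex (sepConvexHull E) :=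
  fun t ht _ hp _ hq hpq _ hF => hF.1 t ht _ (hp _ hF) _ (hq _ hF) hpq

theorem subset_sepConvexHull (E : Set (V × V)) : E ⊆ sepConvexHull E :=
  fun _ hx _ hF => hF.2 hx

theorem sepConvexHull_min {E S : Set (V × V)} (hES : E ⊆ S) (hS : SepConvex S) :
    sepConvexHull E ⊆ S :=
  sInter_subset_of_mem ⟨hS, hES⟩

theorem sepConvexHull_subset_convexHull (E : Set (V × V)) :
    sepConvexHull E ⊆ convexHull ℝ E :=
  sepConvexHull_min (subset_convexHull ℝ E) (convex_convexHull ℝ E).sepConvex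

namespace SepConvex

variable {S : Set (V × V)}

theorem convex_slice_fst (hS : SepConvex S) (b : V) : Convex ℝ {x | (x, b) ∈ S} := by
  refine convex_iff_openSegment_subset.2 fun x hx y hy z => ?_
  rintro ⟨s, t, hs, ht, hst, rfl⟩
  obtain rfl : t = 1 - s := eq_sub_of_add_eq' hst
  simpa [← add_smul] using hS s ⟨hs, by linarith⟩ (x, b) hx (y, b) hy (Or.inr rfl)

theorem convex_slice_snd (hS : SepConvex S) (a : V) : Convex ℝ {y | (a, y) ∈ S} := by
  refine convex_iff_openSegment_subset.2 fun x hx y hy z => ?_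
  rintro ⟨s, t, hs, ht, hst, rfl⟩
  obtain rfl : t = 1 - s := eq_sub_of_add_eq' hst
  simpa [← add_smul] using hS s ⟨hs, by linarith⟩ (a, x) hx (a, y) hy (Or.inl rfl)

/-- Fill in the first coordinate along each horizontal slice, then the second along each
vertical one. -/
theorem convexHull_prod_subset {A B : Set V} (hS : SepConvex S) (hAB : A ×ˢ B ⊆ S) :
    convexHull ℝ A ×ˢ convexHull ℝ B ⊆ S := by
  have hfst : ∀ b ∈ B, convexHull ℝ A ⊆ {x | (x, b) ∈ S} := fun b hb =>
    convexHull_min (fun a ha => hAB ⟨ha, hb⟩) (hS.convex_slice_fst b)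
  rintro ⟨x, y⟩ ⟨hx, hy⟩
  exact convexHull_min (fun b hb => hfst b hb hx) (hS.convex_slice_snd x) hy

end SepConvex

theorem sepConvexHull_prod (A B : Set V) :
    sepConvexHull (A ×ˢ B) = convexHull ℝ A ×ˢ convexHull ℝ B := by
  refine (sepConvexHull_subset_convexHull _).trans_eq (convexHull_prod A B) |>.antisymm ?_
  exact (sepConvex_sepConvexHull _).convexHull_prod_subset (subset_sepConvexHull _)

end

theorem stmt2 {m : ℕ} (A : Set (Fin m → ℝ)) :
    sepConvexHull (A ×ˢ A) = convexHull ℝ (A ×ˢ A) ∧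
      convexHull ℝ (A ×ˢ A) = (convexHull ℝ A) ×ˢ (convexHull ℝ A) :=
  ⟨(sepConvexHull_prod A A).trans (convexHull_prod A A).symm, convexHull_prod A A⟩
end

section
/- Let K ⊆ ℝ^m × ℝ^m be nonempty and compact with K^sc = K^co (its separately convex hull equals its convex hull), and let W(ξ,ζ) = dist^p((ξ,ζ), K) for some p ≥ 1 and some norm on ℝ^m × ℝ^m. Then the separately convex envelope of W equals its convex envelope: W^sc = W^co = dist^p(·, K^co). -/
open Set

/-- `N` is a norm on the real vector space `V`. -/
def IsNorm {V : Type*} [AddCommGroup V] [Module ℝ V] (N : V → ℝ) : Prop :=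
  (∀ x y, N (x + y) ≤ N x + N y) ∧ (∀ (a : ℝ) (x : V), N (a • x) = |a| * N x) ∧
    (∀ x, N x = 0 ↔ x = 0)

/-- Distance of a point to a set, measured in the norm `N`. -/
noncomputable def distTo {V : Type*} [AddCommGroup V] [Module ℝ V]
    (N : V → ℝ) (K : Set V) (x : V) : ℝ :=
  sInf ((fun k => N (x - k)) '' K)

/-- `g` is the convex envelope of `W`: the largest convex function below `W`. -/
def IsConvexEnv {V : Type*} [AddCommGroup V] [Module ℝ V] (W g : V → ℝ) : Prop :=
  ConvexOn ℝ Set.univ g ∧ g ≤ W ∧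
    ∀ h : V → ℝ, ConvexOn ℝ Set.univ h → h ≤ W → h ≤ g

/-- A function on `V × V` is separately convex if it is convex in each of the
two variables separately. -/
def SepConvexFn {V : Type*} [AddCommGroup V] [Module ℝ V] (f : V × V → ℝ) : Prop :=
  (∀ ξ : V, ConvexOn ℝ Set.univ fun ζ => f (ξ, ζ)) ∧
    (∀ ζ : V, ConvexOn ℝ Set.univ fun ξ => f (ξ, ζ))

/-- `g` is the separately convex envelope of `W`. -/
def IsSepConvexEnv {V : Type*} [AddCommGroup V] [Module ℝ V]
    (W g : V × V → ℝ) : Prop :=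
  SepConvexFn g ∧ g ≤ W ∧
    ∀ h : V × V → ℝ, SepConvexFn h → h ≤ W → h ≤ g

section aux

variable {V : Type*} [AddCommGroup V] [Module ℝ V] {N : V → ℝ}

lemma IsNorm.nonneg (hN : IsNorm N) (x : V) : 0 ≤ N x := by
  have h1 := hN.1 x (-x)
  have h2 : N ((-1 : ℝ) • x) = |(-1 : ℝ)| * N x := hN.2.1 (-1) x
  have h3 : N (0 : V) = 0 := (hN.2.2 0).2 rfl
  simp only [neg_one_smul, abs_neg, abs_one, one_mul] at h2
  rw [add_neg_cancel, h3, h2] at h1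
  linarith

lemma distTo_bddBelow (hN : IsNorm N) (K : Set V) (x : V) :
    BddBelow ((fun k => N (x - k)) '' K) := by
  refine ⟨0, fun y hy => ?_⟩
  obtain ⟨k, _, rfl⟩ := hy
  exact hN.nonneg _

lemma distTo_nonneg (hN : IsNorm N) {K : Set V} (hK : K.Nonempty) (x : V) :
    0 ≤ distTo N K x :=
  le_csInf (hK.image _) (fun y hy => by obtain ⟨k, _, rfl⟩ := hy; exact hN.nonneg _)

lemma distTo_le (hN : IsNorm N) {K : Set V} {k : V} (hk : k ∈ K) (x : V) :
    distTo N K x ≤ N (x - k) :=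
  csInf_le (distTo_bddBelow hN K x) ⟨k, hk, rfl⟩

lemma distTo_mono (hN : IsNorm N) {K K' : Set V} (hK : K.Nonempty) (hKK' : K ⊆ K')
    (x : V) : distTo N K' x ≤ distTo N K x :=
  csInf_le_csInf (distTo_bddBelow hN K' x) (hK.image _) (image_mono hKK')

lemma exists_near (hN : IsNorm N) {K : Set V} (hK : K.Nonempty) (x : V) {ε : ℝ}
    (hε : 0 < ε) : ∃ k ∈ K, N (x - k) < distTo N K x + ε := by
  have h : sInf ((fun k => N (x - k)) '' K) < distTo N K x + ε :=
    lt_add_of_pos_right _ hε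
  obtain ⟨y, hy, hlt⟩ := exists_lt_of_csInf_lt (hK.image _) h
  obtain ⟨k, hk, rfl⟩ := hy
  exact ⟨k, hk, hlt⟩

lemma distTo_convexOn (hN : IsNorm N) {K : Set V} (hK : K.Nonempty)
    (hKc : Convex ℝ K) : ConvexOn ℝ Set.univ (distTo N K) := by
  refine ⟨convex_univ, fun x _ y _ a b ha hb hab => ?_⟩
  refine le_of_forall_pos_le_add fun ε hε => ?_
  obtain ⟨kx, hkx, hx⟩ := exists_near hN hK x hε
  obtain ⟨ky, hky, hy⟩ := exists_near hN hK y hε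
  have hmem : a • kx + b • ky ∈ K := hKc hkx hky ha hb hab
  have h1 : distTo N K (a • x + b • y) ≤ N (a • x + b • y - (a • kx + b • ky)) :=
    distTo_le hN hmem _
  have h2 : a • x + b • y - (a • kx + b • ky) = a • (x - kx) + b • (y - ky) := by
    module
  have h3 : N (a • (x - kx) + b • (y - ky)) ≤ a * N (x - kx) + b * N (y - ky) := by
    calc N (a • (x - kx) + b • (y - ky))
        ≤ N (a • (x - kx)) + N (b • (y - ky)) := hN.1 _ _
      _ = a * N (x - kx) + b * N (y - ky) := by
          rw [hN.2.1, hN.2.1, abs_of_nonneg ha, abs_of_nonneg hb]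
  calc distTo N K (a • x + b • y) ≤ a * N (x - kx) + b * N (y - ky) := by
        rw [h2] at h1; exact h1.trans h3
    _ ≤ a * (distTo N K x + ε) + b * (distTo N K y + ε) := by
        gcongr
    _ = a * distTo N K x + b * distTo N K y + (a + b) * ε := by ring
    _ = a • distTo N K x + b • distTo N K y + ε := by rw [hab]; simp [smul_eq_mul]

end aux

theorem stmt4 {m : ℕ} (K : Set ((Fin m → ℝ) × (Fin m → ℝ)))
    (hKne : K.Nonempty) (hKc : IsCompact K)
    (hsc : sepConvexHull K = convexHull ℝ K)
    (N : ((Fin m → ℝ) × (Fin m → ℝ)) → ℝ) (hN : IsNorm N)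
    (p : ℝ) (hp : 1 ≤ p)
    (W : ((Fin m → ℝ) × (Fin m → ℝ)) → ℝ)
    (hW : ∀ q, W q = distTo N K q ^ p) :
    IsSepConvexEnv W (fun q => distTo N (convexHull ℝ K) q ^ p) ∧
      IsConvexEnv W (fun q => distTo N (convexHull ℝ K) q ^ p) := by
  let V := (Fin m → ℝ) × (Fin m → ℝ)
  have hp0 : (0 : ℝ) ≤ p := le_trans zero_le_one hp
  have hcne : (convexHull ℝ K).Nonempty := hKne.mono (subset_convexHull ℝ K)
  set g : V → ℝ := fun q => distTo N (convexHull ℝ K) q ^ p with hg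
  -- g is convex
  have hd : ConvexOn ℝ Set.univ (distTo N (convexHull ℝ K)) :=
    distTo_convexOn hN hcne (convex_convexHull ℝ K)
  have hgconv : ConvexOn ℝ Set.univ g := by
    refine ⟨convex_univ, fun x _ y _ a b ha hb hab => ?_⟩
    have h1 : distTo N (convexHull ℝ K) (a • x + b • y)
        ≤ a * distTo N (convexHull ℝ K) x + b * distTo N (convexHull ℝ K) y := by
      have := hd.2 (mem_univ x) (mem_univ y) ha hb hab
      simpa [smul_eq_mul] using this
    have hx0 := distTo_nonneg hN hcne x
    have hy0 := distTo_nonneg hN hcne y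
    have h2 : (a * distTo N (convexHull ℝ K) x + b * distTo N (convexHull ℝ K) y) ^ p
        ≤ a * distTo N (convexHull ℝ K) x ^ p + b * distTo N (convexHull ℝ K) y ^ p := by
      have := (convexOn_rpow hp).2 (mem_Ici.2 hx0) (mem_Ici.2 hy0) ha hb hab
      simpa [smul_eq_mul] using this
    have h3 : distTo N (convexHull ℝ K) (a • x + b • y) ^ p
        ≤ (a * distTo N (convexHull ℝ K) x + b * distTo N (convexHull ℝ K) y) ^ p :=
      Real.rpow_le_rpow (distTo_nonneg hN hcne _) h1 hp0
    simpa [smul_eq_mul] using h3.trans h2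
  -- g ≤ W
  have hgW : g ≤ W := by
    intro q
    rw [hW q]
    exact Real.rpow_le_rpow (distTo_nonneg hN hcne q)
      (distTo_mono hN hKne (subset_convexHull ℝ K) q) hp0
  -- key maximality lemma
  have key : ∀ h : V → ℝ, h ≤ W →
      (∀ (v : V) (c : ℝ), K ⊆ {k | h (k + v) ≤ c} →
        convexHull ℝ K ⊆ {k | h (k + v) ≤ c}) →
      h ≤ g := by
    intro h hhW hcl q
    set d := distTo N (convexHull ℝ K) q with hd'
    have hd0 : 0 ≤ d := distTo_nonneg hN hcne q
    have main : ∀ ε > (0 : ℝ), h q ≤ (d + ε) ^ p := by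
      intro ε hε
      obtain ⟨k₀, hk₀, hk₀lt⟩ := exists_near hN hcne q hε
      set v := q - k₀ with hv
      have hKsub : K ⊆ {k | h (k + v) ≤ (d + ε) ^ p} := by
        intro k hk
        have h1 : h (k + v) ≤ W (k + v) := hhW _
        have h3 : distTo N K (k + v) ≤ N v := by
          have := distTo_le hN hk (k + v)
          simpa using this
        have h5 : distTo N K (k + v) ^ p ≤ (d + ε) ^ p :=
          Real.rpow_le_rpow (distTo_nonneg hN hKne _) (h3.trans hk₀lt.le) hp0
        have : h (k + v) ≤ (d + ε) ^ p := by
          rw [hW (k + v)] at h1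
          exact h1.trans h5
        exact this
      have hk₀' := hcl v _ hKsub hk₀
      have heq : k₀ + v = q := by rw [hv]; abel
      simpa [Set.mem_setOf_eq, heq] using hk₀'
    have htend : Filter.Tendsto (fun ε : ℝ => (d + ε) ^ p)
        (nhdsWithin 0 (Set.Ioi 0)) (nhds (d ^ p)) := by
      have h1 : Filter.Tendsto (fun ε : ℝ => d + ε) (nhdsWithin 0 (Set.Ioi 0)) (nhds d) := by
        have : Filter.Tendsto (fun ε : ℝ => d + ε) (nhds 0) (nhds (d + 0)) :=
          (continuous_const.add continuous_id).tendsto 0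
        simpa using this.mono_left nhdsWithin_le_nhds
      have h2 : ContinuousAt (fun x : ℝ => x ^ p) d :=
        Real.continuousAt_rpow_const d p (Or.inr hp0)
      exact h2.tendsto.comp h1
    exact ge_of_tendsto htend
      (Filter.eventually_of_mem self_mem_nhdsWithin fun ε hε => main ε hε)
  -- g is separately convex
  have hgsep : SepConvexFn g := by
    constructor
    · intro ξ
      refine ⟨convex_univ, fun x _ y _ a b ha hb hab => ?_⟩
      have heq : ((ξ, a • x + b • y) : V) = a • ((ξ, x) : V) + b • ((ξ, y) : V) := by
        refine Prod.ext ?_ ?_ <;> simp [Prod.smul_fst, Prod.smul_snd]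
        rw [← add_smul, hab, one_smul]
      have := hgconv.2 (mem_univ ((ξ, x) : V)) (mem_univ ((ξ, y) : V)) ha hb hab
      rw [← heq] at this
      simpa [smul_eq_mul] using this
    · intro ζ
      refine ⟨convex_univ, fun x _ y _ a b ha hb hab => ?_⟩
      have heq : ((a • x + b • y, ζ) : V) = a • ((x, ζ) : V) + b • ((y, ζ) : V) := by
        refine Prod.ext ?_ ?_ <;> simp [Prod.smul_fst, Prod.smul_snd]
        rw [← add_smul, hab, one_smul]
      have := hgconv.2 (mem_univ ((x, ζ) : V)) (mem_univ ((y, ζ) : V)) ha hb hab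
      rw [← heq] at this
      simpa [smul_eq_mul] using this
  refine ⟨⟨hgsep, hgW, ?_⟩, ⟨hgconv, hgW, ?_⟩⟩
  · -- separately convex maximality
    intro h hsep hhW
    refine key h hhW ?_
    intro v c hKS
    have hS : SepConvex {k : V | h (k + v) ≤ c} := by
      intro t ht p' hp' q' hq' hor
      have ht1 : (0 : ℝ) ≤ t := ht.1.le
      have ht2 : (0 : ℝ) ≤ 1 - t := by linarith [ht.2]
      have hts : t + (1 - t) = 1 := by ring
      rcases hor with h1 | h1
      · have heq : t • p' + (1 - t) • q' + v =
            ((p'.1 + v.1, t • (p'.2 + v.2) + (1 - t) • (q'.2 + v.2)) : V) := by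
          refine Prod.ext ?_ ?_
          · show t • p'.1 + (1 - t) • q'.1 + v.1 = p'.1 + v.1
            rw [← h1, ← add_smul, hts, one_smul]
          · show t • p'.2 + (1 - t) • q'.2 + v.2
              = t • (p'.2 + v.2) + (1 - t) • (q'.2 + v.2)
            have e : v.2 = t • v.2 + (1 - t) • v.2 := by
              rw [← add_smul, hts, one_smul]
            rw [smul_add, smul_add]
            conv_lhs => rw [e]
            abel
        have hc := (hsep.1 (p'.1 + v.1)).2 (mem_univ (p'.2 + v.2))
          (mem_univ (q'.2 + v.2)) ht1 ht2 hts
        have e1 : ((p'.1 + v.1, p'.2 + v.2) : V) = p' + v := rfl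
        have e2 : ((p'.1 + v.1, q'.2 + v.2) : V) = q' + v := by
          refine Prod.ext ?_ rfl; show p'.1 + v.1 = q'.1 + v.1; rw [h1]
        simp only [smul_eq_mul] at hc
        rw [e1, e2] at hc
        have : h (t • p' + (1 - t) • q' + v) ≤ t * h (p' + v) + (1 - t) * h (q' + v) := by
          rw [heq]; exact hc
        have hb : t * h (p' + v) + (1 - t) * h (q' + v) ≤ t * c + (1 - t) * c := by
          gcongr <;> [exact hp'; exact hq']
        have : h (t • p' + (1 - t) • q' + v) ≤ c := by
          refine this.trans (hb.trans ?_); rw [← add_mul, hts, one_mul]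
        exact this
      · have heq : t • p' + (1 - t) • q' + v =
            ((t • (p'.1 + v.1) + (1 - t) • (q'.1 + v.1), p'.2 + v.2) : V) := by
          refine Prod.ext ?_ ?_
          · show t • p'.1 + (1 - t) • q'.1 + v.1
              = t • (p'.1 + v.1) + (1 - t) • (q'.1 + v.1)
            have e : v.1 = t • v.1 + (1 - t) • v.1 := by
              rw [← add_smul, hts, one_smul]
            rw [smul_add, smul_add]
            conv_lhs => rw [e]
            abel
          · show t • p'.2 + (1 - t) • q'.2 + v.2 = p'.2 + v.2
            rw [← h1, ← add_smul, hts, one_smul]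
        have hc := (hsep.2 (p'.2 + v.2)).2 (mem_univ (p'.1 + v.1))
          (mem_univ (q'.1 + v.1)) ht1 ht2 hts
        have e1 : ((p'.1 + v.1, p'.2 + v.2) : V) = p' + v := rfl
        have e2 : ((q'.1 + v.1, p'.2 + v.2) : V) = q' + v := by
          refine Prod.ext rfl ?_; show p'.2 + v.2 = q'.2 + v.2; rw [h1]
        simp only [smul_eq_mul] at hc
        rw [e1, e2] at hc
        have : h (t • p' + (1 - t) • q' + v) ≤ t * h (p' + v) + (1 - t) * h (q' + v) := by
          rw [heq]; exact hc
        have hb : t * h (p' + v) + (1 - t) * h (q' + v) ≤ t * c + (1 - t) * c := by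
          gcongr <;> [exact hp'; exact hq']
        have : h (t • p' + (1 - t) • q' + v) ≤ c := by
          refine this.trans (hb.trans ?_); rw [← add_mul, hts, one_mul]
        exact this
    rw [← hsc]
    exact sInter_subset_of_mem ⟨hS, hKS⟩
  · -- convex maximality
    intro h hconv hhW
    refine key h hhW ?_
    intro v c hKS
    have hconv' : ConvexOn ℝ Set.univ (fun k : V => h (k + v)) := by
      refine ⟨convex_univ, fun x _ y _ a b ha hb hab => ?_⟩
      have heq : a • x + b • y + v = a • (x + v) + b • (y + v) := by
        have : a • (x + v) + b • (y + v) = a • x + b • y + (a + b) • v := by module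
        rw [this, hab, one_smul]
      simp only [smul_eq_mul]
      show h (a • x + b • y + v) ≤ a * h (x + v) + b * h (y + v)
      rw [heq]
      have := hconv.2 (mem_univ (x + v)) (mem_univ (y + v)) ha hb hab
      simpa [smul_eq_mul] using this
    have hconvS : Convex ℝ {k : V | h (k + v) ≤ c} := by
      have := hconv'.convex_le c
      simpa using this
    exact convexHull_min hKS hconvS
end

section
/- Let K = {(±1,0), (0,±1), (2,2)} ⊆ ℝ × ℝ and W(ξ,ζ) = dist^p((ξ,ζ), K) for any norm on ℝ × ℝ and p ≥ 1. Then the diagonalization of the zero sublevel set satisfies (L₀(W))^∧ = {(2,2)}, whereas the diagonalization of the separately convex hull satisfies {(0,0), (2,2)} ⊆ ((L₀(W))^sc)^∧. In particular, ((L₀(W))^∧)^sc ≠ (L₀(W^sc))^∧ ⊇ ((L₀(W))^sc)^∧, so diagonalization and separate convexification do not commute here. -/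
open Set

/-- The diagonalization of a set `E ⊆ V × V`. -/
def diagSet {V : Type*} (E : Set (V × V)) : Set (V × V) :=
  {p ∈ E | (p.1, p.1) ∈ E ∧ (p.2, p.2) ∈ E}

-- Auxiliary lemmas

lemma subset_sepHull {V : Type*} [AddCommGroup V] [Module ℝ V] (E : Set (V × V)) :
    E ⊆ sepConvexHull E := fun x hx => Set.mem_sInter.mpr fun _F hF => hF.2 hx

lemma sepHull_min {V : Type*} [AddCommGroup V] [Module ℝ V] {E F : Set (V × V)}
    (hF : SepConvex F) (hE : E ⊆ F) : sepConvexHull E ⊆ F :=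
  Set.sInter_subset_of_mem ⟨hF, hE⟩

lemma sepConvex_singleton {V : Type*} [AddCommGroup V] [Module ℝ V] (x : V × V) :
    SepConvex ({x} : Set (V × V)) := by
  intro t _ht a ha b hb _
  simp only [Set.mem_singleton_iff] at *
  subst ha; subst hb
  rw [← add_smul]
  norm_num

lemma diagSet_mono {V : Type*} {E F : Set (V × V)} (h : E ⊆ F) :
    diagSet E ⊆ diagSet F := fun _p hp => ⟨h hp.1, h hp.2.1, h hp.2.2⟩

theorem stmt16 (p : ℝ) (hp : 1 ≤ p)
    (K : Set (ℝ × ℝ))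
    (hK : K = {((1 : ℝ), (0 : ℝ)), (-1, 0), (0, 1), (0, -1), (2, 2)})
    (N : ℝ × ℝ → ℝ) (hN : IsNorm N)
    (W : ℝ × ℝ → ℝ) (hW : ∀ q, W q = distTo N K q ^ p) :
    diagSet {q | W q ≤ 0} = {((2 : ℝ), (2 : ℝ))} ∧
    ({((0 : ℝ), (0 : ℝ)), ((2 : ℝ), (2 : ℝ))} : Set (ℝ × ℝ)) ⊆
      diagSet (sepConvexHull {q | W q ≤ 0}) ∧
    sepConvexHull (diagSet {q | W q ≤ 0}) ≠ diagSet (sepConvexHull {q | W q ≤ 0}) ∧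
    ∀ g : ℝ × ℝ → ℝ, IsSepConvexEnv W g →
      diagSet (sepConvexHull {q | W q ≤ 0}) ⊆ diagSet {q | g q ≤ 0} ∧
      sepConvexHull (diagSet {q | W q ≤ 0}) ≠ diagSet {q | g q ≤ 0} := by
  subst hK
  obtain ⟨hNadd, hNsmul, hNzero⟩ := hN
  have hN0 : N 0 = 0 := (hNzero 0).mpr rfl
  have hNneg : ∀ x, N (-x) = N x := by
    intro x
    have := hNsmul (-1) x
    simpa using this
  have hNnonneg : ∀ x, 0 ≤ N x := by
    intro x
    have h := hNadd x (-x)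
    rw [add_neg_cancel, hN0, hNneg] at h
    linarith
  have hNpos : ∀ x, x ≠ 0 → 0 < N x := fun x hx =>
    lt_of_le_of_ne (hNnonneg x) (fun h => hx ((hNzero x).mp h.symm))
  set K : Set (ℝ × ℝ) := {((1 : ℝ), (0 : ℝ)), (-1, 0), (0, 1), (0, -1), (2, 2)} with hKdef
  have hS : ∀ q : ℝ × ℝ, (fun k => N (q - k)) '' K =
      {N (q - (1, 0)), N (q - (-1, 0)), N (q - (0, 1)), N (q - (0, -1)), N (q - (2, 2))} := by
    intro q
    simp [hKdef, Set.image_insert_eq]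
  have hdist0 : ∀ q ∈ K, distTo N K q = 0 := by
    intro q hq
    have hmem : (0 : ℝ) ∈ (fun k => N (q - k)) '' K :=
      ⟨q, hq, by show N (q - q) = 0; rw [sub_self]; exact hN0⟩
    have hlb : ∀ b ∈ (fun k => N (q - k)) '' K, (0 : ℝ) ≤ b := by
      rintro b ⟨k, _, rfl⟩; exact hNnonneg _
    exact le_antisymm (csInf_le ⟨0, hlb⟩ hmem) (le_csInf ⟨0, hmem⟩ hlb)
  have hdistpos : ∀ q : ℝ × ℝ, q ∉ K → 0 < distTo N K q := by
    intro q hq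
    simp only [hKdef, Set.mem_insert_iff, Set.mem_singleton_iff, not_or] at hq
    obtain ⟨h1, h2, h3, h4, h5⟩ := hq
    set m : ℝ := min (N (q - (1, 0))) (min (N (q - (-1, 0)))
      (min (N (q - (0, 1))) (min (N (q - (0, -1))) (N (q - (2, 2)))))) with hm
    have hmpos : 0 < m :=
      lt_min (hNpos _ (sub_ne_zero.mpr h1)) (lt_min (hNpos _ (sub_ne_zero.mpr h2))
        (lt_min (hNpos _ (sub_ne_zero.mpr h3)) (lt_min (hNpos _ (sub_ne_zero.mpr h4))
        (hNpos _ (sub_ne_zero.mpr h5)))))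
    have hle : m ≤ distTo N K q := by
      refine le_csInf ⟨N (q - (1, 0)), by rw [hS]; left; rfl⟩ ?_
      intro b hb
      rw [hS] at hb
      simp only [Set.mem_insert_iff, Set.mem_singleton_iff] at hb
      rcases hb with rfl | rfl | rfl | rfl | rfl
      · exact min_le_left _ _
      · exact le_trans (min_le_right _ _) (min_le_left _ _)
      · exact le_trans (min_le_right _ _) (le_trans (min_le_right _ _) (min_le_left _ _))
      · exact le_trans (min_le_right _ _) (le_trans (min_le_right _ _)
          (le_trans (min_le_right _ _) (min_le_left _ _)))
      · exact le_trans (min_le_right _ _) (le_trans (min_le_right _ _)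
          (le_trans (min_le_right _ _) (min_le_right _ _)))
    exact lt_of_lt_of_le hmpos hle
  have hL : {q | W q ≤ 0} = K := by
    ext q
    simp only [Set.mem_setOf_eq, hW]
    constructor
    · intro h
      by_contra hq
      have hd := hdistpos q hq
      have : 0 < distTo N K q ^ p := Real.rpow_pos_of_pos hd p
      linarith
    · intro h
      rw [hdist0 q h, Real.zero_rpow (by linarith : p ≠ 0)]
  have hdiagK : diagSet K = {((2 : ℝ), (2 : ℝ))} := by
    ext q
    simp only [diagSet, Set.mem_setOf_eq, Set.mem_singleton_iff]
    constructor
    · rintro ⟨hq, h1, h2⟩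
      simp only [hKdef, Set.mem_insert_iff, Set.mem_singleton_iff, Prod.ext_iff] at hq h1 h2
      rcases hq with ⟨e1, e2⟩ | ⟨e1, e2⟩ | ⟨e1, e2⟩ | ⟨e1, e2⟩ | ⟨e1, e2⟩ <;>
        simp only [e1, e2] at h1 h2 <;> norm_num at h1
      exact Prod.ext_iff.mpr ⟨e1, e2⟩
    · rintro rfl
      refine ⟨?_, ?_, ?_⟩ <;> simp [hKdef]
  have h00 : ((0 : ℝ), (0 : ℝ)) ∈ sepConvexHull K := by
    intro F hF
    obtain ⟨hFsc, hFsub⟩ := hF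
    have h1 : ((0 : ℝ), (1 : ℝ)) ∈ F := hFsub (by simp [hKdef])
    have h2 : ((0 : ℝ), (-1 : ℝ)) ∈ F := hFsub (by simp [hKdef])
    have hmid := hFsc (1/2) (by constructor <;> norm_num) _ h1 _ h2 (Or.inl rfl)
    have heq : ((1:ℝ)/2) • (((0 : ℝ), (1 : ℝ)) : ℝ × ℝ)
        + (1 - (1:ℝ)/2) • (((0 : ℝ), (-1 : ℝ)) : ℝ × ℝ) = ((0 : ℝ), (0 : ℝ)) := by
      rw [Prod.ext_iff]
      constructor <;> simp <;> norm_num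
    rwa [heq] at hmid
  have h22 : ((2 : ℝ), (2 : ℝ)) ∈ sepConvexHull K := subset_sepHull K (by simp [hKdef])
  have hhulldiag : sepConvexHull (diagSet {q | W q ≤ 0}) = {((2 : ℝ), (2 : ℝ))} := by
    rw [hL, hdiagK]
    exact le_antisymm (sepHull_min (sepConvex_singleton _) subset_rfl) (subset_sepHull _)
  refine ⟨by rw [hL, hdiagK], ?_, ?_, ?_⟩
  · rw [hL]
    rintro x (rfl | rfl)
    · exact ⟨h00, h00, h00⟩
    · exact ⟨h22, h22, h22⟩
  · rw [hhulldiag, hL]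
    intro hcontra
    have hmem00 : ((0 : ℝ), (0 : ℝ)) ∈ ({((2 : ℝ), (2 : ℝ))} : Set (ℝ × ℝ)) := by
      rw [hcontra]; exact ⟨h00, h00, h00⟩
    simp [Prod.ext_iff] at hmem00
  · intro g hg
    obtain ⟨⟨hg1, hg2⟩, hgle, _⟩ := hg
    have hsc : SepConvex {q : ℝ × ℝ | g q ≤ 0} := by
      intro t ht a ha b hb hab
      simp only [Set.mem_setOf_eq] at ha hb ⊢
      rcases hab with h | h
      · have hc := (hg1 a.1).2 (Set.mem_univ a.2) (Set.mem_univ b.2) (le_of_lt ht.1)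
          (by linarith [ht.2] : (0:ℝ) ≤ 1 - t) (by ring)
        simp only [smul_eq_mul] at hc
        have heq : t • a + (1 - t) • b = (a.1, t * a.2 + (1 - t) * b.2) := by
          rw [Prod.ext_iff]
          constructor
          · show t * a.1 + (1 - t) * b.1 = a.1
            rw [h]; ring
          · rfl
        rw [heq]
        calc g (a.1, t * a.2 + (1 - t) * b.2) ≤ t * g (a.1, a.2) + (1 - t) * g (a.1, b.2) := hc
          _ ≤ 0 := by
              have ha' : g (a.1, a.2) ≤ 0 := by simpa using ha
              have hb' : g (a.1, b.2) ≤ 0 := by rw [h]; simpa using hb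
              nlinarith [ht.1, ht.2]
      · have hc := (hg2 a.2).2 (Set.mem_univ a.1) (Set.mem_univ b.1) (le_of_lt ht.1)
          (by linarith [ht.2] : (0:ℝ) ≤ 1 - t) (by ring)
        simp only [smul_eq_mul] at hc
        have heq : t • a + (1 - t) • b = (t * a.1 + (1 - t) * b.1, a.2) := by
          rw [Prod.ext_iff]
          constructor
          · rfl
          · show t * a.2 + (1 - t) * b.2 = a.2
            rw [h]; ring
        rw [heq]
        calc g (t * a.1 + (1 - t) * b.1, a.2) ≤ t * g (a.1, a.2) + (1 - t) * g (b.1, a.2) := hc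
          _ ≤ 0 := by
              have ha' : g (a.1, a.2) ≤ 0 := by simpa using ha
              have hb' : g (b.1, a.2) ≤ 0 := by rw [h]; simpa using hb
              nlinarith [ht.1, ht.2]
    have hKsub : K ⊆ {q : ℝ × ℝ | g q ≤ 0} := by
      intro x hx
      have hWx : W x ≤ 0 := by rw [← hL] at hx; exact hx
      exact le_trans (hgle x) hWx
    constructor
    · refine diagSet_mono ?_
      rw [hL]
      exact sepHull_min hsc hKsub
    · rw [hhulldiag]
      have hg01 : g ((0 : ℝ), (1 : ℝ)) ≤ 0 := hKsub (by simp [hKdef])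
      have hg0m1 : g ((0 : ℝ), (-1 : ℝ)) ≤ 0 := hKsub (by simp [hKdef])
      have hg00 : g ((0 : ℝ), (0 : ℝ)) ≤ 0 := by
        have hc := (hg1 (0 : ℝ)).2 (Set.mem_univ (1 : ℝ)) (Set.mem_univ (-1 : ℝ))
          (by norm_num : (0:ℝ) ≤ 1/2) (by norm_num : (0:ℝ) ≤ 1/2) (by norm_num)
        simp only [smul_eq_mul] at hc
        have h0 : (1:ℝ)/2 * 1 + 1/2 * (-1) = 0 := by norm_num
        rw [h0] at hc
        nlinarith [hg01, hg0m1]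
      intro hcontra
      have hmem00 : ((0 : ℝ), (0 : ℝ)) ∈ ({((2 : ℝ), (2 : ℝ))} : Set (ℝ × ℝ)) := by
        rw [hcontra]
        exact ⟨hg00, hg00, hg00⟩
      simp [Prod.ext_iff] at hmem00
end

section
/- Let W : ℝ^m × ℝ^m → ℝ be symmetric, lower semicontinuous with p-growth and p-coercivity (1 < p < ∞), and suppose min W < min Ŵ, where Ŵ is the diagonalization of W. Let Ω ⊆ ℝ^n be open, bounded, nonempty. Then |Ω|² · min Ŵ ≥ inf over u ∈ L^p(Ω; ℝ^m) of I_W(u) > |Ω|² · min W, where I_W(u) = ∫_Ω∫_Ω W(u(x), u(y)) dx dy. In particular, the infimum of the double integral strictly exceeds |Ω|² times the minimum of the integrand. -/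
open MeasureTheory Set

/-- The diagonalization of a symmetric function. -/
noncomputable def diagFn {V : Type*} (W : V × V → ℝ) : V × V → ℝ :=
  fun p => sInf {c : ℝ | p ∈ diagSet {q | W q ≤ c}}

open Filter
open scoped Function

/-!
Since `Ŵ(ξ, ξ) = W(ξ, ξ)`, the gap `min W < min Ŵ` gives `ε > 0` with `W ≥ min W + ε` on the
diagonal. By lower semicontinuity and compactness this persists on a uniform neighbourhood of the
diagonal over a large ball, and by coercivity it holds as soon as one argument leaves that ball.
Hence `ℝ^m` splits into `N` measurable pieces `D i` with `W ≥ min W + ε` on each `D i × D i`, and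
for every `u` the double integral is at least `|Ω|² min W + ε ∑ |u⁻¹(D i)|²`, which by
Cauchy–Schwarz is at least `|Ω|² (min W + ε / N)`. The upper bound comes from a constant `u`
whose value is a diagonal point of a minimiser of `Ŵ`.
-/

theorem diagFn_eq_max {V : Type*} (W : V × V → ℝ) (q : V × V) :
    diagFn W q = max (W q) (max (W (q.1, q.1)) (W (q.2, q.2))) := by
  have : {c : ℝ | q ∈ diagSet {q' | W q' ≤ c}} =
      Ici (max (W q) (max (W (q.1, q.1)) (W (q.2, q.2)))) := by
    ext c
    simp [diagSet]
  rw [diagFn, this, csInf_Ici]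

theorem exists_forall_le_of_coercive {V : Type*} [SeminormedAddCommGroup V]
    {W : V × V → ℝ} {p c C : ℝ} (hp : 0 < p) (hc : 0 < c)
    (hW : ∀ ξ ζ, c * (‖ξ‖ ^ p + ‖ζ‖ ^ p) - C ≤ W (ξ, ζ)) (b : ℝ) :
    ∃ R, ∀ ξ, R < ‖ξ‖ → ∀ ζ, b ≤ W (ξ, ζ) := by
  have htends : Tendsto (fun t : ℝ => c * t ^ p + -C) atTop atTop :=
    tendsto_atTop_add_const_right _ _ ((tendsto_rpow_atTop hp).const_mul_atTop hc)
  obtain ⟨R, hR⟩ := eventually_atTop.1 (htends.eventually_ge_atTop b)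
  refine ⟨R, fun ξ hξ ζ => ?_⟩
  have : 0 ≤ c * ‖ζ‖ ^ p := by positivity
  linarith [hR ‖ξ‖ hξ.le, hW ξ ζ]

theorem LowerSemicontinuous.exists_pos_lt_of_dist_lt {X : Type*} [PseudoMetricSpace X]
    {W : X × X → ℝ} (hW : LowerSemicontinuous W) {K : Set X} (hK : IsCompact K) {b : ℝ}
    (hb : ∀ ξ ∈ K, b < W (ξ, ξ)) :
    ∃ r > 0, ∀ ξ ∈ K, ∀ ζ, dist ξ ζ < r → b < W (ξ, ζ) := by
  have hdiag : IsCompact ((fun ξ => (ξ, ξ)) '' K) :=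
    hK.image (continuous_id.prodMk continuous_id)
  obtain ⟨r, hr, hsub⟩ := hdiag.exists_thickening_subset_open (hW.isOpen_preimage b)
    (by rintro _ ⟨ξ, hξ, rfl⟩; exact hb ξ hξ)
  refine ⟨r, hr, fun ξ hξ ζ hξζ => hsub (Metric.mem_thickening_iff.2 ⟨(ξ, ξ), ⟨ξ, hξ, rfl⟩, ?_⟩)⟩
  simpa [Prod.dist_eq, dist_comm] using hξζ

theorem IsCompact.exists_measurable_partition_dist_lt {X : Type*} [PseudoMetricSpace X]
    [MeasurableSpace X] [OpensMeasurableSpace X] {K : Set X} (hK : IsCompact K) {r : ℝ}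
    (hr : 0 < r) :
    ∃ (N : ℕ) (D : Fin N → Set X), (∀ i, MeasurableSet (D i)) ∧ Pairwise (Disjoint on D) ∧
      ⋃ i, D i = univ ∧ ∀ i, ∀ ξ ∈ D i, ∀ ζ ∈ D i, ξ ∈ K → dist ξ ζ < r := by
  obtain ⟨t, -, ht, hKt⟩ := finite_cover_balls_of_compact hK (half_pos hr)
  obtain ⟨N, c, rfl⟩ := ht.fin_embedding
  rw [biUnion_range] at hKt
  -- the extra piece `B 0` collects the points outside all the balls, hence outside `K`
  let B : Fin (N + 1) → Set X := Fin.cons (⋃ i, Metric.ball (c i) (r / 2))ᶜ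
    fun i => Metric.ball (c i) (r / 2)
  have hB : ∀ i, MeasurableSet (B i) := Fin.cases
    (MeasurableSet.iUnion fun _ => measurableSet_ball).compl fun _ => measurableSet_ball
  refine ⟨N + 1, disjointed B, fun i => ?_, disjoint_disjointed B, ?_, fun i => ?_⟩
  · rw [disjointed_eq_inter_compl]
    exact (hB i).inter (.iInter fun j => .iInter fun _ => (hB j).compl)
  · rw [iUnion_disjointed, eq_univ_iff_forall]
    intro x
    simp only [mem_iUnion, Fin.exists_fin_succ]
    by_cases hx : x ∈ ⋃ i, Metric.ball (c i) (r / 2)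
    · exact Or.inr (mem_iUnion.1 hx)
    · exact Or.inl hx
  intro ξ hξ ζ hζ hξK
  replace hξ := disjointed_subset B i hξ
  replace hζ := disjointed_subset B i hζ
  induction i using Fin.cases with
  | zero => exact absurd (hKt hξK) hξ
  | succ j =>
    have hξ' : dist ξ (c j) < r / 2 := hξ
    have hζ' : dist ζ (c j) < r / 2 := hζ
    linarith [dist_triangle_right ξ ζ (c j)]

theorem LowerSemicontinuous.exists_measurable_partition_le {X : Type*} [PseudoMetricSpace X]
    [MeasurableSpace X] [OpensMeasurableSpace X] {W : X × X → ℝ} (hW : LowerSemicontinuous W)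
    {K : Set X} (hK : IsCompact K) {b : ℝ} (hdiag : ∀ ξ ∈ K, b < W (ξ, ξ))
    (hout : ∀ ξ ∉ K, ∀ ζ, b ≤ W (ξ, ζ)) :
    ∃ (N : ℕ) (D : Fin N → Set X), (∀ i, MeasurableSet (D i)) ∧ Pairwise (Disjoint on D) ∧
      ⋃ i, D i = univ ∧ ∀ i, ∀ q ∈ D i ×ˢ D i, b ≤ W q := by
  obtain ⟨r, hr, hnear⟩ := hW.exists_pos_lt_of_dist_lt hK hdiag
  obtain ⟨N, D, hDm, hDdisj, hDcov, hDdist⟩ := hK.exists_measurable_partition_dist_lt hr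
  refine ⟨N, D, hDm, hDdisj, hDcov, fun i ⟨ξ, ζ⟩ ⟨hξ, hζ⟩ => ?_⟩
  by_cases hξK : ξ ∈ K
  · exact (hnear ξ hξK ζ (hDdist i ξ hξ ζ hζ hξK)).le
  · exact hout ξ hξK ζ

section PartitionBound

variable {α ι : Type*} [MeasurableSpace α] {μ : Measure α} [IsFiniteMeasure μ] [Fintype ι]
  {A : ι → Set α}

theorem sq_measureReal_univ_le_card_mul (hA : ∀ i, MeasurableSet (A i))
    (hdisj : Pairwise (Disjoint on A)) (hcov : ⋃ i, A i = univ) :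
    μ.real univ ^ 2 ≤ Fintype.card ι * (μ.prod μ).real (⋃ i, A i ×ˢ A i) := by
  have hprod : (μ.prod μ).real (⋃ i, A i ×ˢ A i) = ∑ i, μ.real (A i) ^ 2 := by
    rw [measureReal_iUnion_fintype (fun i j hij => disjoint_prod.2 (.inl (hdisj hij)))
      (fun i => (hA i).prod (hA i))]
    simp [measureReal_prod_prod, sq]
  rw [hprod, ← hcov, measureReal_iUnion_fintype hdisj hA]
  simpa using sq_sum_le_card_mul_sum_sq (s := Finset.univ) (f := fun i => μ.real (A i))

theorem le_integral_prod_of_partition {F : α × α → ℝ} (hF : Integrable F (μ.prod μ))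
    (hA : ∀ i, MeasurableSet (A i)) (hdisj : Pairwise (Disjoint on A)) (hcov : ⋃ i, A i = univ)
    {m ε : ℝ} (hε : 0 ≤ ε) (hm : ∀ q, m ≤ F q) (hmε : ∀ i, ∀ q ∈ A i ×ˢ A i, m + ε ≤ F q) :
    μ.real univ ^ 2 * (m + ε / Fintype.card ι) ≤ ∫ q, F q ∂μ.prod μ := by
  set E := ⋃ i, A i ×ˢ A i
  have hE : MeasurableSet E := .iUnion fun i => (hA i).prod (hA i)
  have hlow : ∀ q, m + ε * E.indicator 1 q ≤ F q := by
    intro q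
    by_cases hq : q ∈ E
    · obtain ⟨i, hi⟩ := mem_iUnion.1 hq
      simpa [indicator_of_mem hq] using hmε i q hi
    · simpa [indicator_of_notMem hq] using hm q
  have hind : Integrable (E.indicator (1 : α × α → ℝ)) (μ.prod μ) :=
    (integrable_const 1).indicator hE
  calc μ.real univ ^ 2 * (m + ε / Fintype.card ι)
      = μ.real univ ^ 2 * m + ε * (μ.real univ ^ 2 / Fintype.card ι) := by ring
    _ ≤ μ.real univ ^ 2 * m + ε * (μ.prod μ).real E := by
      gcongr
      exact div_le_of_le_mul₀ (Nat.cast_nonneg _) measureReal_nonneg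
        ((sq_measureReal_univ_le_card_mul hA hdisj hcov).trans_eq (mul_comm _ _))
    _ = ∫ q, m + ε * E.indicator 1 q ∂μ.prod μ := by
      rw [integral_add (integrable_const m) (hind.const_mul ε),
        integral_const, integral_const_mul, integral_indicator_one hE, ← univ_prod_univ,
        measureReal_prod_prod, smul_eq_mul]
      ring
    _ ≤ ∫ q, F q ∂μ.prod μ := integral_mono ((integrable_const m).add (hind.const_mul ε)) hF hlow

end PartitionBound

section DoubleIntegral

variable {α V : Type*} [MeasurableSpace α] {μ : Measure α} [IsFiniteMeasure μ]
  [NormedAddCommGroup V] [MeasurableSpace V] {W : V × V → ℝ} {p m C : ℝ}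

theorem integrable_comp_prod_of_growth (hW : Measurable W) (hm : ∀ q, m ≤ W q)
    (hgrowth : ∀ ξ ζ, W (ξ, ζ) ≤ C * (‖ξ‖ ^ p + ‖ζ‖ ^ p + 1)) {u : α → V} (hu : Measurable u)
    (hup : Integrable (fun x => ‖u x‖ ^ p) μ) :
    Integrable (fun q : α × α => W (u q.1, u q.2)) (μ.prod μ) := by
  refine Integrable.mono' (g := fun q => |m| + |C| * (‖u q.1‖ ^ p + ‖u q.2‖ ^ p + 1))
    ((integrable_const _).add (((hup.comp_fst μ).add (hup.comp_snd μ)).add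
      (integrable_const 1) |>.const_mul _))
    (hW.comp ((hu.comp measurable_fst).prodMk (hu.comp measurable_snd))).aestronglyMeasurable
    (.of_forall fun q => ?_)
  have hX : 0 ≤ ‖u q.1‖ ^ p + ‖u q.2‖ ^ p + 1 := by positivity
  rw [Real.norm_eq_abs, abs_le]
  constructor
  · nlinarith [neg_abs_le m, hm (u q.1, u q.2), abs_nonneg C]
  · nlinarith [le_abs_self m, le_abs_self C, hgrowth (u q.1) (u q.2), abs_nonneg m]

theorem le_integral_integral_of_partition [BorelSpace V] (hW : Measurable W)
    (hm : ∀ q, m ≤ W q) (hgrowth : ∀ ξ ζ, W (ξ, ζ) ≤ C * (‖ξ‖ ^ p + ‖ζ‖ ^ p + 1))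
    {ι : Type*} [Fintype ι] {D : ι → Set V} (hD : ∀ i, MeasurableSet (D i))
    (hdisj : Pairwise (Disjoint on D)) (hcov : ⋃ i, D i = univ) {ε : ℝ} (hε : 0 ≤ ε)
    (hmε : ∀ i, ∀ q ∈ D i ×ˢ D i, m + ε ≤ W q) (hp : 0 < p) {u : α → V}
    (hu : MemLp u (ENNReal.ofReal p) μ) :
    μ.real univ ^ 2 * (m + ε / Fintype.card ι) ≤ ∫ x, ∫ y, W (u x, u y) ∂μ ∂μ := by
  -- replace `u` by a measurable representative, so that the sets `v ⁻¹' D i` are measurable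
  set v := hu.aestronglyMeasurable.mk u
  have hv : Measurable v := hu.aestronglyMeasurable.stronglyMeasurable_mk.measurable
  have huv : u =ᵐ[μ] v := hu.aestronglyMeasurable.ae_eq_mk
  have hvp : Integrable (fun x => ‖v x‖ ^ p) μ := by
    have := (hu.ae_eq huv).integrable_norm_rpow (by simpa using hp) ENNReal.ofReal_ne_top
    rwa [ENNReal.toReal_ofReal hp.le] at this
  have hF := integrable_comp_prod_of_growth hW hm hgrowth hv hvp
  calc μ.real univ ^ 2 * (m + ε / Fintype.card ι)
      ≤ ∫ q, W (v q.1, v q.2) ∂μ.prod μ :=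
        le_integral_prod_of_partition hF (A := fun i => v ⁻¹' D i) (fun i => hv (hD i))
          (fun i j hij => (hdisj hij).preimage v) (by rw [← preimage_iUnion, hcov, preimage_univ])
          hε (fun q => hm _) (fun i q hq => hmε i _ hq)
    _ = ∫ x, ∫ y, W (v x, v y) ∂μ ∂μ := integral_prod _ hF
    _ = ∫ x, ∫ y, W (u x, u y) ∂μ ∂μ := by
      refine integral_congr_ae ?_
      filter_upwards [huv] with x hx
      refine integral_congr_ae ?_
      filter_upwards [huv] with y hy
      rw [hx, hy]

end DoubleIntegral

theorem stmt19_general {n m : ℕ}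
    (Ω : Set (EuclideanSpace ℝ (Fin n)))
    (hΩo : IsOpen Ω) (hΩb : Bornology.IsBounded Ω) (hΩne : Ω.Nonempty)
    (p : ℝ) (hp1 : 1 < p)
    (W : EuclideanSpace ℝ (Fin m) × EuclideanSpace ℝ (Fin m) → ℝ)
    (hlsc : LowerSemicontinuous W)
    (hgrowth : ∃ C : ℝ, ∀ ξ ζ, W (ξ, ζ) ≤ C * (‖ξ‖ ^ p + ‖ζ‖ ^ p + 1))
    (hcoercive : ∃ c C : ℝ, 0 < c ∧ 0 < C ∧
      ∀ ξ ζ, c * (‖ξ‖ ^ p + ‖ζ‖ ^ p) - C ≤ W (ξ, ζ))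
    (mW mWhat : ℝ)
    (hmW : IsLeast (Set.range W) mW)
    (hmWhat : IsLeast (Set.range (diagFn W)) mWhat)
    (hlt : mW < mWhat) :
    sInf {y : ℝ | ∃ u : EuclideanSpace ℝ (Fin n) → EuclideanSpace ℝ (Fin m),
        MemLp u (ENNReal.ofReal p) (volume.restrict Ω) ∧
        (∫ x in Ω, ∫ y in Ω, W (u x, u y)) = y} ≤ (volume Ω).toReal ^ 2 * mWhat ∧
    (volume Ω).toReal ^ 2 * mW <
      sInf {y : ℝ | ∃ u : EuclideanSpace ℝ (Fin n) → EuclideanSpace ℝ (Fin m),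
        MemLp u (ENNReal.ofReal p) (volume.restrict Ω) ∧
        (∫ x in Ω, ∫ y in Ω, W (u x, u y)) = y} := by
  obtain ⟨Cg, hCg⟩ := hgrowth
  obtain ⟨c, C, hc, -, hcoer⟩ := hcoercive
  have hp : 0 < p := by linarith
  have hWmin : ∀ q, mW ≤ W q := fun q => hmW.2 ⟨q, rfl⟩
  obtain ⟨ε, hε, hεlt⟩ : ∃ ε, 0 < ε ∧ mW + ε < mWhat :=
    ⟨(mWhat - mW) / 2, by linarith, by linarith⟩
  have hdiag : ∀ ξ, mW + ε < W (ξ, ξ) := fun ξ => by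
    have := hmWhat.2 ⟨(ξ, ξ), rfl⟩
    simp only [diagFn_eq_max, max_self] at this
    linarith
  obtain ⟨R, hR⟩ := exists_forall_le_of_coercive hp hc hcoer (mW + ε)
  obtain ⟨N, D, hDm, hDdisj, hDcov, hDW⟩ := hlsc.exists_measurable_partition_le
    (isCompact_closedBall 0 R) (fun ξ _ => hdiag ξ) fun ξ hξ => hR ξ (by simpa using hξ)
  have hN : 0 < N := Nat.pos_of_ne_zero fun h => by
    subst h
    exact empty_ne_univ (by simpa using hDcov)
  have : IsFiniteMeasure (volume.restrict Ω) := isFiniteMeasure_restrict.2 hΩb.measure_lt_top.ne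
  have hμ : 0 < (volume Ω).toReal :=
    ENNReal.toReal_pos (hΩo.measure_pos volume hΩne).ne' hΩb.measure_lt_top.ne
  set S := {y : ℝ | ∃ u : EuclideanSpace ℝ (Fin n) → EuclideanSpace ℝ (Fin m),
    MemLp u (ENNReal.ofReal p) (volume.restrict Ω) ∧ (∫ x in Ω, ∫ y in Ω, W (u x, u y)) = y}
  have hlow : ∀ y ∈ S, (volume Ω).toReal ^ 2 * (mW + ε / N) ≤ y := by
    rintro _ ⟨u, hu, rfl⟩
    simpa [Measure.real] using le_integral_integral_of_partition hlsc.measurable hWmin hCg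
      hDm hDdisj hDcov hε.le hDW hp hu
  obtain ⟨⟨ξ₀, ζ₀⟩, hq₀⟩ := hmWhat.1
  have hξ₀ : W (ξ₀, ξ₀) ≤ mWhat := hq₀ ▸ by simp [diagFn_eq_max]
  have hconst : (volume Ω).toReal ^ 2 * W (ξ₀, ξ₀) ∈ S :=
    ⟨fun _ => ξ₀, memLp_const ξ₀, by simp [Measure.real, sq, mul_assoc]⟩
  refine ⟨(csInf_le ⟨_, hlow⟩ hconst).trans (by gcongr), ?_⟩
  calc (volume Ω).toReal ^ 2 * mW < (volume Ω).toReal ^ 2 * (mW + ε / N) := by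
        gcongr; exact lt_add_of_pos_right _ (by positivity)
    _ ≤ sInf S := le_csInf ⟨_, hconst⟩ hlow

theorem stmt19 {n m : ℕ}
    (Ω : Set (EuclideanSpace ℝ (Fin n)))
    (hΩo : IsOpen Ω) (hΩb : Bornology.IsBounded Ω) (hΩne : Ω.Nonempty)
    (p : ℝ) (hp1 : 1 < p)
    (W : EuclideanSpace ℝ (Fin m) × EuclideanSpace ℝ (Fin m) → ℝ)
    (hsym : ∀ ξ ζ, W (ξ, ζ) = W (ζ, ξ))
    (hlsc : LowerSemicontinuous W)
    (hgrowth : ∃ C : ℝ, ∀ ξ ζ, W (ξ, ζ) ≤ C * (‖ξ‖ ^ p + ‖ζ‖ ^ p + 1))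
    (hcoercive : ∃ c C : ℝ, 0 < c ∧ 0 < C ∧
      ∀ ξ ζ, c * (‖ξ‖ ^ p + ‖ζ‖ ^ p) - C ≤ W (ξ, ζ))
    (mW mWhat : ℝ)
    (hmW : IsLeast (Set.range W) mW)
    (hmWhat : IsLeast (Set.range (diagFn W)) mWhat)
    (hlt : mW < mWhat) :
    sInf {y : ℝ | ∃ u : EuclideanSpace ℝ (Fin n) → EuclideanSpace ℝ (Fin m),
        MemLp u (ENNReal.ofReal p) (volume.restrict Ω) ∧
        (∫ x in Ω, ∫ y in Ω, W (u x, u y)) = y} ≤ (volume Ω).toReal ^ 2 * mWhat ∧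
    (volume Ω).toReal ^ 2 * mW <
      sInf {y : ℝ | ∃ u : EuclideanSpace ℝ (Fin n) → EuclideanSpace ℝ (Fin m),
        MemLp u (ENNReal.ofReal p) (volume.restrict Ω) ∧
        (∫ x in Ω, ∫ y in Ω, W (u x, u y)) = y} :=
  stmt19_general Ω hΩo hΩb hΩne p hp1 W hlsc hgrowth hcoercive mW mWhat hmW hmWhat hlt
end
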